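/- arXiv:1102.1831 — 4 statements merged into one kernel-verified Lean document; each statement's English description precedes it below -/
import Mathlib

section
/- Let C ⊆ ℝ^n be a finitely generated convex cone and γ a linear form with γ(C) ⊆ [0,∞), C ∩ ker γ = {0}, and γ injective on ℤ^n. Define a ≤ b on ℤ^n by γ(a) ≤ γ(b). Then ≤ is a total (linear) order on ℤ^n, and for every v ∈ ℝ^n the set (v + C) ∩ ℤ^n is well-ordered under ≤. -/
/-- Let `C ⊆ ℝⁿ` be a finitely generated convex cone and `γ` a linear
form with `γ(C) ⊆ [0,∞)`, `C ∩ ker γ = {0}`, and `γ` injective on `ℤⁿ`.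
Define `a ≤ b` on `ℤⁿ` by `γ(a) ≤ γ(b)`.  Then `≤` is a total (linear) order on
`ℤⁿ`, and for every `v ∈ ℝⁿ` the set `(v + C) ∩ ℤⁿ` is well-ordered under `≤`
(every nonempty subset has a least element). -/
theorem lattice_order_wellordered_on_translated_cone (n ℓ : ℕ)
    (v : Fin ℓ → (Fin n → ℝ)) (C : Set (Fin n → ℝ))
    (hC : C = {x | ∃ c : Fin ℓ → ℝ, (∀ i, 0 ≤ c i) ∧ x = ∑ i, c i • v i})
    (γ : (Fin n → ℝ) →ₗ[ℝ] ℝ)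
    (hnonneg : ∀ x ∈ C, 0 ≤ γ x)
    (hpointed : ∀ x ∈ C, γ x = 0 → x = 0)
    (ι : (Fin n → ℤ) → (Fin n → ℝ)) (hι : ι = fun a i => (a i : ℝ))
    (hinj : Function.Injective (γ ∘ ι))
    (le : (Fin n → ℤ) → (Fin n → ℤ) → Prop)
    (hle : le = fun a b => γ (ι a) ≤ γ (ι b)) :
    IsLinearOrder (Fin n → ℤ) le ∧
    ∀ w : Fin n → ℝ, ∀ S : Set (Fin n → ℤ), S.Nonempty →
      (∀ a ∈ S, ι a ∈ (w + ·) '' C) →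
      ∃ m ∈ S, ∀ a ∈ S, le m a := by
  subst hle
  constructor
  · refine { refl := ?_, trans := ?_, antisymm := ?_, total := ?_ }
    · exact fun a => le_refl _
    · exact fun a b c hab hbc => le_trans hab hbc
    · exact fun a b h1 h2 => hinj (le_antisymm h1 h2 : (γ ∘ ι) a = (γ ∘ ι) b)
    · exact fun a b => le_total _ _
  · intro w S hS hSC
    obtain ⟨a0, ha0⟩ := hS
    set M : ℝ := γ (ι a0) with hM
    set T : Set (Fin n → ℤ) := {b ∈ S | γ (ι b) ≤ M} with hT
    -- each generator is in C, hence has nonneg γ, and is 0 if γ = 0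
    have hvC : ∀ i, v i ∈ C := by
      intro i
      rw [hC]
      refine ⟨fun j => if j = i then 1 else 0, fun j => by positivity, ?_⟩
      simp [ite_smul]
    have hvpos : ∀ i, v i ≠ 0 → 0 < γ (v i) := fun i hvi =>
      lt_of_le_of_ne (hnonneg _ (hvC i)) fun h => hvi (hpointed _ (hvC i) h.symm)
    set B : ℝ := M - γ w with hB
    set D : Fin ℓ → ℝ := fun i => if v i = 0 then 0 else B / γ (v i) * ‖v i‖ with hD
    set R : ℝ := ‖w‖ + ∑ i, D i with hR
    -- every b ∈ T has ‖ι b‖ ≤ R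
    have hbound : ∀ b ∈ T, ‖ι b‖ ≤ R := by
      intro b hb
      obtain ⟨x, hxC, hx⟩ := hSC b hb.1
      rw [hC] at hxC
      obtain ⟨c, hc0, hcx⟩ := hxC
      have hιb : ι b = w + ∑ i, c i • v i := by rw [← hcx]; exact hx.symm
      have hγsum : ∑ i, c i * γ (v i) ≤ B := by
        have : γ (ι b) = γ w + ∑ i, c i * γ (v i) := by
          rw [hιb]; simp [map_sum]
        have hbM := hb.2
        rw [this] at hbM
        linarith
      have hterm : ∀ i, ‖c i • v i‖ ≤ D i := by
        intro i
        by_cases hvi : v i = 0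
        · simp [hD, hvi]
        · have hpos := hvpos i hvi
          have hci : c i ≤ B / γ (v i) := by
            have h1 : c i * γ (v i) ≤ B := by
              refine le_trans (Finset.single_le_sum (f := fun i => c i * γ (v i))
                (fun j _ => mul_nonneg (hc0 j) (hnonneg _ (hvC j)))
                (Finset.mem_univ i)) hγsum
            exact (le_div_iff₀ hpos).mpr h1
          simp only [hD, if_neg hvi, norm_smul, Real.norm_eq_abs,
            abs_of_nonneg (hc0 i)]
          exact mul_le_mul_of_nonneg_right hci (norm_nonneg _)
      calc ‖ι b‖ ≤ ‖w‖ + ‖∑ i, c i • v i‖ := by rw [hιb]; exact norm_add_le _ _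
        _ ≤ ‖w‖ + ∑ i, ‖c i • v i‖ := by
            gcongr; exact norm_sum_le _ _
        _ ≤ ‖w‖ + ∑ i, D i := by gcongr with i; exact hterm i
    -- hence T is finite
    have hTfin : T.Finite := by
      have hsub : T ⊆ Set.pi Set.univ (fun _ : Fin n => Set.Icc (-⌈R⌉) ⌈R⌉) := by
        intro b hb j _
        have h1 : |(b j : ℝ)| ≤ R := by
          have := norm_le_pi_norm (ι b) j
          simpa [hι] using le_trans this (hbound b hb)
        have h2 : R ≤ (⌈R⌉ : ℝ) := Int.le_ceil R
        have h3 : |(b j : ℝ)| ≤ (⌈R⌉ : ℝ) := le_trans h1 h2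
        rw [← Int.cast_abs] at h3
        have h4 : |b j| ≤ ⌈R⌉ := by exact_mod_cast h3
        exact Set.mem_Icc.mpr (abs_le.mp h4)
      exact Set.Finite.subset (Set.Finite.pi fun _ => Set.finite_Icc _ _) hsub
    have hTne : T.Nonempty := ⟨a0, ha0, le_refl _⟩
    obtain ⟨m, hmT, hmin⟩ := Set.exists_min_image T (fun b => γ (ι b)) hTfin hTne
    refine ⟨m, hmT.1, fun a haS => ?_⟩
    by_cases haM : γ (ι a) ≤ M
    · exact hmin a ⟨haS, haM⟩
    · exact le_trans hmT.2 (le_of_not_ge haM)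
end

section
/- Let R be a ℤ^n-graded ring with support in a pointed cone C and R_0 its degree-zero subring, R_+ = ⊕_{a>0} R_a, so R_0 ≅ R/R_+. For every finitely generated graded projective R-module P, the quotient T(P) = P/PR_+ is a finitely generated projective graded R_0-module, and the canonical short exact sequence 0 → PR_+ → P → T(P) → 0 of graded R_0-modules admits a degree-preserving R_0-linear splitting σ : T(P) → P. -/
/-!
Because the support of `R` lies in a pointed cone, two degrees of the support add up to `0` only
when both are `0`; hence the degree-zero projection `ψ : R → R₀`, `r ↦ r₀`, is a ring homomorphism.
Its kernel is `R₊` and the inclusion `φ : R₀ → R` is a section of it. If `P` is a graded direct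
summand of `⊕ R(-bᵢ)` via `s` and `p`, the map `x ↦ p (φ (ψ (s x)))` kills `PR₊`, agrees with the
identity modulo `PR₊`, preserves degrees and is `R₀`-linear, so it descends to the splitting `σ`.
The same maps exhibit `T(P)` as a direct summand of `R₀ᵐ`, and since `σ` maps the image of each
homogeneous component of `P` back into that component, these images decompose `T(P)`.
-/

/-- A `ℤⁿ`-graded `R`-module `(P, 𝒬)` is *finitely generated graded projective* if it
is a degree-preserving direct summand of a finite direct sum of shifted copies
`R(-bᵢ)` of `R` (where `R(-b)_a = R_{a-b}`). -/
def IsFGGradedProjective {n : ℕ} {R : Type*} [Ring R] (𝒜 : (Fin n → ℤ) → AddSubgroup R)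
    {P : Type*} [AddCommGroup P] [Module R P] (𝒬 : (Fin n → ℤ) → AddSubgroup P) : Prop :=
  ∃ (m : ℕ) (b : Fin m → (Fin n → ℤ)) (s : P →ₗ[R] (Fin m → R)) (p : (Fin m → R) →ₗ[R] P),
    p.comp s = LinearMap.id ∧
    (∀ (a : Fin n → ℤ) (x : P), x ∈ 𝒬 a → ∀ i, s x i ∈ 𝒜 (a - b i)) ∧
    (∀ (a : Fin n → ℤ) (y : Fin m → R), (∀ i, y i ∈ 𝒜 (a - b i)) → p y ∈ 𝒬 a)

/-- The degree-zero part `R₀ = 𝒜 0` of a graded ring acts on any `R`-module. -/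
def gradeZeroModule {n : ℕ} {R : Type*} [Ring R] (𝒜 : (Fin n → ℤ) → AddSubgroup R)
    [GradedRing 𝒜] (M : Type*) [AddCommGroup M] [Module R M] : Module ↥(𝒜 0) M :=
  Module.compHom M
    ({ toFun := fun r => (r : R), map_one' := rfl, map_mul' := fun _ _ => rfl,
       map_zero' := rfl, map_add' := fun _ _ => rfl } : ↥(𝒜 0) →+* R)

open DirectSum

theorem AddSubgroup.ne_bot_of_mem_of_ne_zero {G : Type*} [AddGroup G] {H : AddSubgroup G} {x : G}
    (hx : x ∈ H) (hx0 : x ≠ 0) : H ≠ ⊥ :=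
  fun h => hx0 (AddSubgroup.mem_bot.mp (h ▸ hx))

theorem DirectSum.IsInternal.map_of_rightInverse {ι M N : Type*} [DecidableEq ι]
    [AddCommGroup M] [AddCommGroup N] {A : ι → AddSubgroup M} (hA : IsInternal A)
    {f : M →+ N} {g : N →+ M} (hfg : Function.RightInverse g f)
    (hgA : ∀ i, ∀ x ∈ A i, g (f x) ∈ A i) :
    IsInternal fun i => (A i).map f := by
  have hg : ∀ i, ∀ y ∈ (A i).map f, g y ∈ A i := by
    rintro i _ ⟨x, hx, rfl⟩
    exact hgA i x hx
  let F : (⨁ i, A i) →+ ⨁ i, (A i).map f := map fun i => f.addSubgroupMap (A i)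
  let L : (⨁ i, (A i).map f) →+ ⨁ i, A i :=
    map fun i => (g.comp ((A i).map f).subtype).codRestrict (A i) fun y => hg i y y.2
  have hF : ∀ z, DirectSum.coeAddMonoidHom _ (F z) = f (DirectSum.coeAddMonoidHom A z) := by
    intro z
    induction z using DirectSum.induction_on <;> simp_all [F]
  have hL : ∀ z, DirectSum.coeAddMonoidHom A (L z) = g (DirectSum.coeAddMonoidHom _ z) := by
    intro z
    induction z using DirectSum.induction_on with
    | zero => simp
    | of i y => simp only [L, map_of, coeAddMonoidHom_of]; rfl
    | add y z hy hz => simp_all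
  have hFL : ∀ z, F (L z) = z := by
    intro z
    induction z using DirectSum.induction_on with
    | zero => simp
    | of i y => simp only [F, L, map_of]; congr 1; exact Subtype.ext (hfg y)
    | add y z hy hz => simp_all
  refine ⟨fun z z' h => ?_, fun y => ?_⟩
  · have hLz : L z = L z' := hA.1 (by rw [hL, hL, h])
    rw [← hFL z, ← hFL z', hLz]
  · obtain ⟨w, hw⟩ := hA.2 (g y)
    exact ⟨F w, by rw [hF, hw, hfg y]⟩

section Retraction

variable {S R P : Type*} [Ring S] [Ring R] [AddCommGroup P] [Module R P]
  (φ : S →+* R) (ψ : R →+* S) {m : ℕ} (s : P →ₗ[R] (Fin m → R)) (p : (Fin m → R) →ₗ[R] P)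

theorem LinearMap.map_mem_smul_top_of_forall_mem {I : Ideal R} {v : Fin m → R}
    (hv : ∀ i, v i ∈ I) : p v ∈ I • (⊤ : Submodule R P) := by
  rw [pi_eq_sum_univ v, map_sum]
  refine Submodule.sum_mem _ fun i _ => ?_
  rw [map_smul]
  exact Submodule.smul_mem_smul (hv i) trivial

def reduceCoords : P ⧸ (RingHom.ker ψ • ⊤ : Submodule R P) →ₛₗ[ψ] (Fin m → S) :=
  (RingHom.ker ψ • ⊤ : Submodule R P).liftQ
    { toFun := fun x i => ψ (s x i)
      map_add' := fun x y => by ext i; simp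
      map_smul' := fun r x => by ext i; simp }
    (Submodule.smul_le.mpr fun r hr x _ => by ext i; simp [RingHom.mem_ker.mp hr])

def liftCoords : (Fin m → S) →ₛₗ[φ] P where
  toFun y := p fun i => φ (y i)
  map_add' y y' := by rw [← map_add]; congr 1; ext i; simp
  map_smul' c y := by rw [← map_smul]; congr 1; ext i; simp

def reducedSection : P ⧸ (RingHom.ker ψ • ⊤ : Submodule R P) →+ P :=
  (liftCoords φ p).toAddMonoidHom.comp (reduceCoords ψ s).toAddMonoidHom

theorem reducedSection_mk (x : P) :
    reducedSection φ ψ s p (Submodule.Quotient.mk x) = p fun i => φ (ψ (s x i)) :=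
  rfl

theorem reducedSection_smul (r : R) (t : P ⧸ (RingHom.ker ψ • ⊤ : Submodule R P)) :
    reducedSection φ ψ s p (r • t) = φ (ψ r) • reducedSection φ ψ s p t := by
  simp only [reducedSection, AddMonoidHom.comp_apply, LinearMap.toAddMonoidHom_coe,
    LinearMap.map_smulₛₗ]

variable {φ ψ s p}

theorem mk_reducedSection (hψφ : ∀ c, ψ (φ c) = c) (hps : ∀ x, p (s x) = x)
    (t : P ⧸ (RingHom.ker ψ • ⊤ : Submodule R P)) :
    Submodule.Quotient.mk (reducedSection φ ψ s p t) = t := by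
  induction t using Submodule.Quotient.induction_on with
  | H x =>
    have h := p.map_mem_smul_top_of_forall_mem (I := RingHom.ker ψ)
      (v := (fun i => φ (ψ (s x i))) - s x) fun i => by simp [hψφ]
    rw [map_sub, hps] at h
    rwa [reducedSection_mk, Submodule.Quotient.eq]

theorem finite_and_projective_quotient_ker_smul_top (hψφ : ∀ c, ψ (φ c) = c)
    (hps : ∀ x, p (s x) = x) :
    letI := Module.compHom (P ⧸ (RingHom.ker ψ • ⊤ : Submodule R P)) φ
    Module.Finite S (P ⧸ (RingHom.ker ψ • ⊤ : Submodule R P)) ∧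
      Module.Projective S (P ⧸ (RingHom.ker ψ • ⊤ : Submodule R P)) := by
  let _ := Module.compHom (P ⧸ (RingHom.ker ψ • ⊤ : Submodule R P)) φ
  let incl : (Fin m → S) →ₗ[S] P ⧸ (RingHom.ker ψ • ⊤ : Submodule R P) :=
    { toFun := fun y => Submodule.Quotient.mk (liftCoords φ p y)
      map_add' := fun y y' => by rw [map_add, Submodule.Quotient.mk_add]
      map_smul' := fun c y => by rw [LinearMap.map_smulₛₗ]; rfl }
  let coords : P ⧸ (RingHom.ker ψ • ⊤ : Submodule R P) →ₗ[S] (Fin m → S) :=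
    { toFun := reduceCoords ψ s
      map_add' := map_add _
      map_smul' := fun c t => by
        rw [show c • t = φ c • t from rfl, LinearMap.map_smulₛₗ, hψφ]; rfl }
  have hsplit : incl ∘ₗ coords = LinearMap.id := LinearMap.ext (mk_reducedSection hψφ hps)
  exact ⟨Module.Finite.of_surjective incl fun t => ⟨coords t, LinearMap.congr_fun hsplit t⟩,
    Module.Projective.of_split coords incl hsplit⟩

end Retraction

section PositiveGrading

variable {ι R α : Type*} [AddCommMonoid ι] [Ring R] (𝒜 : ι → AddSubgroup R)
  [AddCommMonoid α] [PartialOrder α] [IsOrderedAddMonoid α] (w : ι →+ α)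

def IsPositiveWeight : Prop :=
  ∀ a, a ≠ 0 → 𝒜 a ≠ ⊥ → 0 < w a

def positiveIdeal : Ideal R :=
  Ideal.span (⋃ a ∈ {a | 0 < w a}, (𝒜 a : Set R))

variable {𝒜 w}

theorem IsPositiveWeight.eq_zero_of_add_eq_zero (hw : IsPositiveWeight 𝒜 w) {a b : ι}
    (ha : 𝒜 a ≠ ⊥) (hb : 𝒜 b ≠ ⊥) (hab : a + b = 0) : a = 0 := by
  by_contra ha0
  have hb0 : 0 ≤ w b := by
    rcases eq_or_ne b 0 with rfl | hb0
    · rw [map_zero]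
    · exact (hw b hb0 hb).le
  have := add_pos_of_pos_of_nonneg (hw a ha0 ha) hb0
  rw [← map_add, hab, map_zero] at this
  exact this.false

variable [DecidableEq ι] [GradedRing 𝒜]

theorem IsPositiveWeight.coe_decompose_mul_zero_of_mem (hw : IsPositiveWeight 𝒜 w) {i j : ι}
    {x y : R} (hx : x ∈ 𝒜 i) (hy : y ∈ 𝒜 j) :
    (decompose 𝒜 (x * y) 0 : R) = decompose 𝒜 x 0 * decompose 𝒜 y 0 := by
  rcases eq_or_ne x 0 with rfl | hx0
  · simp
  rcases eq_or_ne y 0 with rfl | hy0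
  · simp
  by_cases hij : i + j = 0
  · obtain rfl := hw.eq_zero_of_add_eq_zero (AddSubgroup.ne_bot_of_mem_of_ne_zero hx hx0)
      (AddSubgroup.ne_bot_of_mem_of_ne_zero hy hy0) hij
    obtain rfl : j = 0 := by rwa [zero_add] at hij
    have hxy : x * y ∈ 𝒜 0 := by simpa using SetLike.mul_mem_graded hx hy
    rw [decompose_of_mem_same 𝒜 hx, decompose_of_mem_same 𝒜 hy, decompose_of_mem_same 𝒜 hxy]
  · rw [decompose_of_mem_ne 𝒜 (SetLike.mul_mem_graded hx hy) hij]
    rcases eq_or_ne i 0 with rfl | hi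
    · rw [zero_add] at hij
      rw [decompose_of_mem_ne 𝒜 hy hij, mul_zero]
    · rw [decompose_of_mem_ne 𝒜 hx hi, zero_mul]

variable (𝒜)

def degZeroRingHom (hw : IsPositiveWeight 𝒜 w) : R →+* 𝒜 0 where
  toFun r := decompose 𝒜 r 0
  map_one' := Subtype.ext (decompose_of_mem_same 𝒜 SetLike.GradedOne.one_mem)
  map_zero' := by simp
  map_add' _ _ := by simp
  map_mul' x y := by
    induction x using Decomposition.inductionOn 𝒜 with
    | zero => simp
    | homogeneous x =>
      induction y using Decomposition.inductionOn 𝒜 with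
      | zero => simp
      | homogeneous y => exact Subtype.ext (hw.coe_decompose_mul_zero_of_mem x.2 y.2)
      | add y y' hy hy' => simp only [mul_add, decompose_add, DirectSum.add_apply, hy, hy']
    | add x x' hx hx' => simp only [add_mul, decompose_add, DirectSum.add_apply, hx, hx']

variable (hw : IsPositiveWeight 𝒜 w)

theorem coe_degZeroRingHom (r : R) : (degZeroRingHom 𝒜 hw r : R) = decompose 𝒜 r 0 :=
  rfl

theorem degZeroRingHom_coe (r : 𝒜 0) : degZeroRingHom 𝒜 hw r = r :=
  Subtype.ext (decompose_of_mem_same 𝒜 r.2)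

theorem coe_degZeroRingHom_mem {r : R} {a : ι} (hr : r ∈ 𝒜 a) :
    (degZeroRingHom 𝒜 hw r : R) ∈ 𝒜 a := by
  rcases eq_or_ne a 0 with rfl | ha
  · exact SetLike.coe_mem _
  · rw [coe_degZeroRingHom, decompose_of_mem_ne 𝒜 hr ha]
    exact zero_mem _

theorem sub_degZeroRingHom_mem_positiveIdeal (r : R) :
    r - degZeroRingHom 𝒜 hw r ∈ positiveIdeal 𝒜 w := by
  induction r using Decomposition.inductionOn 𝒜 with
  | zero => simp
  | @homogeneous a x =>
    rcases eq_or_ne a 0 with rfl | ha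
    · rw [degZeroRingHom_coe, sub_self]
      exact zero_mem _
    · rw [coe_degZeroRingHom, decompose_of_mem_ne 𝒜 x.2 ha, sub_zero]
      rcases eq_or_ne (x : R) 0 with hx0 | hx0
      · rw [hx0]
        exact zero_mem _
      · refine Ideal.subset_span (Set.mem_biUnion ?_ x.2)
        exact hw a ha (AddSubgroup.ne_bot_of_mem_of_ne_zero x.2 hx0)
  | add x y hx hy =>
    rw [map_add, AddSubgroup.coe_add, add_sub_add_comm]
    exact add_mem hx hy

theorem ker_degZeroRingHom : RingHom.ker (degZeroRingHom 𝒜 hw) = positiveIdeal 𝒜 w := by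
  refine le_antisymm (fun r hr => ?_) (Ideal.span_le.mpr ?_)
  · simpa [RingHom.mem_ker.mp hr] using sub_degZeroRingHom_mem_positiveIdeal 𝒜 hw r
  · refine Set.iUnion₂_subset fun a ha x hx => ?_
    have ha0 : a ≠ 0 := by
      rintro rfl
      exact (map_zero w ▸ ha : (0 : α) < 0).false
    exact RingHom.mem_ker.mpr (Subtype.ext (decompose_of_mem_ne 𝒜 hx ha0))

end PositiveGrading

def gradeZeroSubtype {ι R : Type*} [AddMonoid ι] [Ring R] (𝒜 : ι → AddSubgroup R)
    [SetLike.GradedMonoid 𝒜] : 𝒜 0 →+* R :=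
  (SetLike.GradeZero.subring 𝒜).subtype

section GradedSplitting

variable {ι R α P : Type*} [AddCommGroup ι] [DecidableEq ι] [Ring R] {𝒜 : ι → AddSubgroup R}
  [GradedRing 𝒜] [AddCommMonoid α] [PartialOrder α] [IsOrderedAddMonoid α] {w : ι →+ α}
  (hw : IsPositiveWeight 𝒜 w) [AddCommGroup P] [Module R P] {m : ℕ}
  {s : P →ₗ[R] (Fin m → R)} {p : (Fin m → R) →ₗ[R] P}

theorem reducedSection_mem_of_mem {𝒬 : ι → AddSubgroup P} {b : Fin m → ι}
    (hs : ∀ a x, x ∈ 𝒬 a → ∀ i, s x i ∈ 𝒜 (a - b i))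
    (hp : ∀ a y, (∀ i, y i ∈ 𝒜 (a - b i)) → p y ∈ 𝒬 a) {a : ι} {x : P} (hx : x ∈ 𝒬 a) :
    reducedSection (gradeZeroSubtype 𝒜) (degZeroRingHom 𝒜 hw) s p
      (Submodule.Quotient.mk x) ∈ 𝒬 a :=
  hp a _ fun i => coe_degZeroRingHom_mem 𝒜 hw (hs a x hx i)

theorem reducedSection_smul_of_mem_zero {r : R} (hr : r ∈ 𝒜 0)
    (t : P ⧸ (RingHom.ker (degZeroRingHom 𝒜 hw) • ⊤ : Submodule R P)) :
    reducedSection (gradeZeroSubtype 𝒜) (degZeroRingHom 𝒜 hw) s p (r • t) =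
      r • reducedSection (gradeZeroSubtype 𝒜) (degZeroRingHom 𝒜 hw) s p t := by
  rw [reducedSection_smul, degZeroRingHom_coe 𝒜 hw ⟨r, hr⟩]
  rfl

end GradedSplitting

theorem TP_fg_projective_and_split_general (n : ℕ) (C : Set (Fin n → ℝ))
    (γ : (Fin n → ℝ) →ₗ[ℝ] ℝ)
    (hnonneg : ∀ x ∈ C, 0 ≤ γ x)
    (ι : (Fin n → ℤ) → (Fin n → ℝ)) (hι : ι = fun a i => (a i : ℝ))
    (hinj : Function.Injective (γ ∘ ι))
    -- the graded ring `R` with support in `C`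
    (R : Type*) [Ring R] (𝒜 : (Fin n → ℤ) → AddSubgroup R) [GradedRing 𝒜]
    (hsupp : ∀ a, 𝒜 a ≠ ⊥ → ι a ∈ C)
    (Rplus : Ideal R)
    (hRplus : Rplus = Ideal.span (⋃ a ∈ {a : Fin n → ℤ | 0 < γ (ι a)}, (𝒜 a : Set R)))
    -- a finitely generated graded projective `R`-module `P`
    (P : Type*) [AddCommGroup P] [Module R P]
    (𝒬 : (Fin n → ℤ) → AddSubgroup P)
    (hPinternal : DirectSum.IsInternal 𝒬)
    (hPproj : IsFGGradedProjective 𝒜 𝒬)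
    -- `T(P) = P/PR₊`, with its induced grading
    (π : P →ₗ[R] (P ⧸ (Rplus • (⊤ : Submodule R P))))
    (hπ : π = (Rplus • (⊤ : Submodule R P)).mkQ) :
    -- `T(P)` is a graded `R₀`-module (the images of the `𝒬 a` decompose it), …
    (DirectSum.IsInternal fun a : Fin n → ℤ =>
      (𝒬 a).map π.toAddMonoidHom) ∧
    -- … finitely generated and projective over `R₀ = 𝒜 0`, …
    (letI := gradeZeroModule 𝒜 (P ⧸ (Rplus • (⊤ : Submodule R P)));
      Module.Finite ↥(𝒜 0) (P ⧸ (Rplus • (⊤ : Submodule R P))) ∧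
      Module.Projective ↥(𝒜 0) (P ⧸ (Rplus • (⊤ : Submodule R P)))) ∧
    -- … and `π` admits a degree-preserving `R₀`-linear splitting `σ`.
    (∃ σ : (P ⧸ (Rplus • (⊤ : Submodule R P))) →+ P,
      (∀ t, π (σ t) = t) ∧
      (∀ r ∈ 𝒜 0, ∀ t, σ (r • t) = r • σ t) ∧
      (∀ (a : Fin n → ℤ) (x : P), x ∈ 𝒬 a → σ (π x) ∈ 𝒬 a)) := by
  subst hι hπ
  let w : (Fin n → ℤ) →+ ℝ := γ.toAddMonoidHom.comp ((Int.castAddHom ℝ).compLeft (Fin n))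
  have hw : IsPositiveWeight 𝒜 w := fun a ha hA =>
    (hnonneg _ (hsupp a hA)).lt_of_ne fun h => ha (hinj (h.symm.trans (map_zero w).symm))
  obtain rfl : Rplus = RingHom.ker (degZeroRingHom 𝒜 hw) :=
    hRplus.trans (ker_degZeroRingHom 𝒜 hw).symm
  obtain ⟨m, b, s, p, hps, hs, hp⟩ := hPproj
  have hsp : ∀ x, p (s x) = x := LinearMap.congr_fun hps
  let σ := reducedSection (gradeZeroSubtype 𝒜) (degZeroRingHom 𝒜 hw) s p
  have hπσ : ∀ t, Submodule.Quotient.mk (σ t) = t := mk_reducedSection (degZeroRingHom_coe 𝒜 hw) hsp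
  have hσ : ∀ a x, x ∈ 𝒬 a → σ (Submodule.Quotient.mk x) ∈ 𝒬 a :=
    fun _ _ hx => reducedSection_mem_of_mem hw hs hp hx
  exact ⟨hPinternal.map_of_rightInverse hπσ hσ,
    finite_and_projective_quotient_ker_smul_top (degZeroRingHom_coe 𝒜 hw) hsp,
    σ, hπσ, fun _ hr => reducedSection_smul_of_mem_zero hw hr, hσ⟩

/-- Let `R` be a `ℤⁿ`-graded ring with support in a pointed cone `C`,
`R₀` its degree-zero subring and `R₊ = ⊕_{a>0} R_a`.  For every finitely generated
graded projective `R`-module `P`, the quotient `T(P) = P/PR₊` is a finitely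
generated projective graded `R₀`-module, and the canonical short exact sequence
`0 → PR₊ → P → T(P) → 0` of graded `R₀`-modules admits a degree-preserving
`R₀`-linear splitting `σ : T(P) → P`. -/
theorem TP_fg_projective_and_split (n ℓ : ℕ)
    (vgen : Fin ℓ → (Fin n → ℝ)) (C : Set (Fin n → ℝ))
    (hC : C = {x | ∃ c : Fin ℓ → ℝ, (∀ i, 0 ≤ c i) ∧ x = ∑ i, c i • vgen i})
    (γ : (Fin n → ℝ) →ₗ[ℝ] ℝ)
    (hnonneg : ∀ x ∈ C, 0 ≤ γ x)
    (hpointed : ∀ x ∈ C, γ x = 0 → x = 0)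
    (ι : (Fin n → ℤ) → (Fin n → ℝ)) (hι : ι = fun a i => (a i : ℝ))
    (hinj : Function.Injective (γ ∘ ι))
    -- the graded ring `R` with support in `C`
    (R : Type*) [Ring R] (𝒜 : (Fin n → ℤ) → AddSubgroup R) [GradedRing 𝒜]
    (hsupp : ∀ a, 𝒜 a ≠ ⊥ → ι a ∈ C)
    (Rplus : Ideal R)
    (hRplus : Rplus = Ideal.span (⋃ a ∈ {a : Fin n → ℤ | 0 < γ (ι a)}, (𝒜 a : Set R)))
    -- a finitely generated graded projective `R`-module `P`
    (P : Type*) [AddCommGroup P] [Module R P]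
    (𝒬 : (Fin n → ℤ) → AddSubgroup P)
    (hPinternal : DirectSum.IsInternal 𝒬)
    (hPsmul : ∀ (a b : Fin n → ℤ) (r : R) (x : P), r ∈ 𝒜 a → x ∈ 𝒬 b → r • x ∈ 𝒬 (a + b))
    (hPproj : IsFGGradedProjective 𝒜 𝒬)
    -- `T(P) = P/PR₊`, with its induced grading
    (π : P →ₗ[R] (P ⧸ (Rplus • (⊤ : Submodule R P))))
    (hπ : π = (Rplus • (⊤ : Submodule R P)).mkQ) :
    -- `T(P)` is a graded `R₀`-module (the images of the `𝒬 a` decompose it), …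
    (DirectSum.IsInternal fun a : Fin n → ℤ =>
      (𝒬 a).map π.toAddMonoidHom) ∧
    -- … finitely generated and projective over `R₀ = 𝒜 0`, …
    (letI := gradeZeroModule 𝒜 (P ⧸ (Rplus • (⊤ : Submodule R P)));
      Module.Finite ↥(𝒜 0) (P ⧸ (Rplus • (⊤ : Submodule R P))) ∧
      Module.Projective ↥(𝒜 0) (P ⧸ (Rplus • (⊤ : Submodule R P)))) ∧
    -- … and `π` admits a degree-preserving `R₀`-linear splitting `σ`.
    (∃ σ : (P ⧸ (Rplus • (⊤ : Submodule R P))) →+ P,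
      (∀ t, π (σ t) = t) ∧
      (∀ r ∈ 𝒜 0, ∀ t, σ (r • t) = r • σ t) ∧
      (∀ (a : Fin n → ℤ) (x : P), x ∈ 𝒬 a → σ (π x) ∈ 𝒬 a)) :=
  TP_fg_projective_and_split_general n C γ hnonneg ι hι hinj R 𝒜 hsupp Rplus hRplus P 𝒬 hPinternal
    hPproj π hπ
end

section
/- In the setting above, the assignment P ↦ F^a P is an exact functor on the category of finitely generated graded projective R-modules: it preserves short exact sequences (of graded R-modules, exact in each degree), and F^{a'} P ⊆ F^a P whenever a' ≤ a. -/
open DirectSum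

lemma F_aux_graded_pull {ι : Type*} [DecidableEq ι] {P Q : Type*} [AddCommGroup P]
    [AddCommGroup Q] (𝒬 : ι → AddSubgroup P) (𝒮 : ι → AddSubgroup Q)
    (hP : DirectSum.IsInternal 𝒬)
    (hQ : Function.Injective (DirectSum.coeAddMonoidHom 𝒮))
    (φ : P →+ Q) (hφ : ∀ i (x : P), x ∈ 𝒬 i → φ x ∈ 𝒮 i)
    (c : ι) (x : P) (hx : φ x ∈ 𝒮 c) :
    ∃ x₀ ∈ 𝒬 c, φ x₀ = φ x := by
  obtain ⟨y, hy⟩ := hP.surjective x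
  let ψ : ∀ i, 𝒬 i →+ 𝒮 i := fun i =>
    AddMonoidHom.codRestrict (φ.comp (𝒬 i).subtype) (𝒮 i) (fun z => hφ i z z.2)
  let G : (⨁ i, 𝒬 i) →+ ⨁ i, 𝒮 i := DFinsupp.mapRange.addMonoidHom ψ
  have hG_of : ∀ (i : ι) (z : 𝒬 i), G (DirectSum.of _ i z) = DirectSum.of _ i (ψ i z) := by
    intro i z
    exact DFinsupp.mapRange_single (f := fun i => ψ i) (hf := fun i => (ψ i).map_zero)
  have hcomm : ∀ w : ⨁ i, 𝒬 i,
      DirectSum.coeAddMonoidHom 𝒮 (G w) = φ (DirectSum.coeAddMonoidHom 𝒬 w) := by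
    intro w
    induction w using DirectSum.induction_on with
    | zero => simp
    | of i z => rw [hG_of, DirectSum.coeAddMonoidHom_of, DirectSum.coeAddMonoidHom_of]; rfl
    | add w1 w2 h1 h2 => simp [map_add, h1, h2]
  have hGy : G y = DirectSum.of _ c (⟨φ x, hx⟩ : 𝒮 c) := by
    apply hQ
    rw [hcomm, hy, DirectSum.coeAddMonoidHom_of]
  refine ⟨(y c : P), (y c).2, ?_⟩
  have := congrArg (fun w : ⨁ i, 𝒮 i => (w c : Q)) hGy
  simp only [DirectSum.of_eq_same] at this
  have hGyc : (G y) c = ψ c (y c) :=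
    DFinsupp.mapRange_apply (fun i => ψ i) (fun i => (ψ i).map_zero) y c
  rw [hGyc] at this
  exact this



/-- In the setting of the paper, the assignment `P ↦ F^a P` (with
`F^a P` the graded submodule generated by all `P_d` with `d ≤ a`) is an exact
functor on finitely generated graded projective `R`-modules: it is functorial for
degree-preserving maps, preserves short exact sequences (of graded `R`-modules),
and `F^{a'} P ⊆ F^a P` whenever `a' ≤ a`. -/
theorem F_exact_functor (n ℓ : ℕ)
    (vgen : Fin ℓ → (Fin n → ℝ)) (C : Set (Fin n → ℝ))
    (hC : C = {x | ∃ c : Fin ℓ → ℝ, (∀ i, 0 ≤ c i) ∧ x = ∑ i, c i • vgen i})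
    (γ : (Fin n → ℝ) →ₗ[ℝ] ℝ)
    (hnonneg : ∀ x ∈ C, 0 ≤ γ x)
    (hpointed : ∀ x ∈ C, γ x = 0 → x = 0)
    (ι : (Fin n → ℤ) → (Fin n → ℝ)) (hι : ι = fun a i => (a i : ℝ))
    (hinj : Function.Injective (γ ∘ ι))
    -- the graded ring `R` with support in `C`
    (R : Type*) [Ring R] (𝒜 : (Fin n → ℤ) → AddSubgroup R) [GradedRing 𝒜]
    (hsupp : ∀ a, 𝒜 a ≠ ⊥ → ι a ∈ C)
    -- finitely generated graded projective `R`-modules `P'`, `P`, `P''`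
    (P' P P'' : Type*) [AddCommGroup P'] [Module R P'] [AddCommGroup P] [Module R P]
    [AddCommGroup P''] [Module R P'']
    (𝒬' : (Fin n → ℤ) → AddSubgroup P') (𝒬 : (Fin n → ℤ) → AddSubgroup P)
    (𝒬'' : (Fin n → ℤ) → AddSubgroup P'')
    (hP'internal : DirectSum.IsInternal 𝒬') (hPinternal : DirectSum.IsInternal 𝒬)
    (hP''internal : DirectSum.IsInternal 𝒬'')
    (hP'smul : ∀ (a b : Fin n → ℤ) (r : R) (x : P'), r ∈ 𝒜 a → x ∈ 𝒬' b → r • x ∈ 𝒬' (a + b))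
    (hPsmul : ∀ (a b : Fin n → ℤ) (r : R) (x : P), r ∈ 𝒜 a → x ∈ 𝒬 b → r • x ∈ 𝒬 (a + b))
    (hP''smul : ∀ (a b : Fin n → ℤ) (r : R) (x : P''), r ∈ 𝒜 a → x ∈ 𝒬'' b → r • x ∈ 𝒬'' (a + b))
    (hP'proj : IsFGGradedProjective 𝒜 𝒬') (hPproj : IsFGGradedProjective 𝒜 𝒬)
    (hP''proj : IsFGGradedProjective 𝒜 𝒬'')
    -- the filtration submodules `F^a`
    (F' : (Fin n → ℤ) → Submodule R P') (F : (Fin n → ℤ) → Submodule R P)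
    (F'' : (Fin n → ℤ) → Submodule R P'')
    (hF' : F' = fun a => Submodule.span R
      (⋃ d ∈ {d : Fin n → ℤ | γ (ι d) ≤ γ (ι a)}, (𝒬' d : Set P')))
    (hF : F = fun a => Submodule.span R
      (⋃ d ∈ {d : Fin n → ℤ | γ (ι d) ≤ γ (ι a)}, (𝒬 d : Set P)))
    (hF'' : F'' = fun a => Submodule.span R
      (⋃ d ∈ {d : Fin n → ℤ | γ (ι d) ≤ γ (ι a)}, (𝒬'' d : Set P'')))
    -- a short exact sequence `0 → P' → P → P'' → 0` of degree-preserving maps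
    (f : P' →ₗ[R] P) (g : P →ₗ[R] P'')
    (hfdeg : ∀ (a : Fin n → ℤ) (x : P'), x ∈ 𝒬' a → f x ∈ 𝒬 a)
    (hgdeg : ∀ (a : Fin n → ℤ) (x : P), x ∈ 𝒬 a → g x ∈ 𝒬'' a)
    (hfinj : Function.Injective f) (hgsurj : Function.Surjective g)
    (hexact : LinearMap.range f = LinearMap.ker g)
    (a : Fin n → ℤ) :
    -- functoriality: degree-preserving maps preserve the filtration
    (Submodule.map f (F' a) ≤ F a) ∧ (Submodule.map g (F a) ≤ F'' a) ∧
    -- exactness of `0 → F^a P' → F^a P → F^a P'' → 0`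
    (Submodule.map f (F' a) = F a ⊓ LinearMap.ker g) ∧
    (Submodule.map g (F a) = F'' a) ∧
    -- monotonicity of the filtration
    (∀ a' : Fin n → ℤ, γ (ι a') ≤ γ (ι a) → F a' ≤ F a) := by
  subst hF hF' hF''
  -- degree-wise surjectivity of g
  have surjdeg : ∀ (c : Fin n → ℤ) (x'' : P''), x'' ∈ 𝒬'' c → ∃ x ∈ 𝒬 c, g x = x'' := by
    intro c x'' hx''
    obtain ⟨x0, hx0⟩ := hgsurj x''
    obtain ⟨x, hx, hgx⟩ := F_aux_graded_pull 𝒬 𝒬'' hPinternal hP''internal.injective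
      g.toAddMonoidHom (fun i z hz => hgdeg i z hz) c x0 (by rw [LinearMap.toAddMonoidHom_coe]; rw [hx0]; exact hx'')
    exact ⟨x, hx, by rw [LinearMap.toAddMonoidHom_coe] at hgx; rw [hgx, hx0]⟩
  -- degree-wise exactness: kernel elements of degree c come from 𝒬' c
  have kerdeg : ∀ (c : Fin n → ℤ) (x : P), x ∈ 𝒬 c → g x = 0 → ∃ y ∈ 𝒬' c, f y = x := by
    intro c x hx hgx
    have hxr : x ∈ LinearMap.range f := hexact ▸ LinearMap.mem_ker.2 hgx
    obtain ⟨y0, hy0⟩ := hxr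
    obtain ⟨y, hy, hfy⟩ := F_aux_graded_pull 𝒬' 𝒬 hP'internal hPinternal.injective
      f.toAddMonoidHom (fun i z hz => hfdeg i z hz) c y0 (by rw [LinearMap.toAddMonoidHom_coe]; rw [hy0]; exact hx)
    exact ⟨y, hy, by rw [LinearMap.toAddMonoidHom_coe] at hfy; rw [hfy, hy0]⟩
  -- construct a degree-preserving section h of g using projectivity of P''
  obtain ⟨m, b, s'', p'', hps, hs, hp⟩ := hP''proj
  have hei : ∀ i, p'' (Pi.single i (1 : R)) ∈ 𝒬'' (b i) := by
    intro i
    apply hp (b i)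
    intro j
    by_cases hji : j = i
    · subst hji
      rw [Pi.single_eq_same, sub_self]
      exact SetLike.one_mem_graded 𝒜
    · rw [Pi.single_eq_of_ne hji]
      exact (𝒜 _).zero_mem
  choose w hw1 hw2 using fun i => surjdeg (b i) (p'' (Pi.single i (1 : R))) (hei i)
  let q : (Fin m → R) →ₗ[R] P :=
    { toFun := fun y => ∑ i, y i • w i
      map_add' := by intro y z; simp [add_smul, Finset.sum_add_distrib]
      map_smul' := by intro r y; simp [mul_smul, Finset.smul_sum] }
  have hq : ∀ y : Fin m → R, g (q y) = p'' y := by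
    intro y
    have : g (q y) = ∑ i, y i • p'' (Pi.single i (1 : R)) := by
      simp only [q, LinearMap.coe_mk, AddHom.coe_mk, map_sum, map_smul]
      exact Finset.sum_congr rfl fun i _ => by rw [hw2]
    rw [this]
    have : ∑ i, y i • p'' (Pi.single i (1 : R)) = p'' (∑ i, Pi.single i (y i)) := by
      rw [map_sum]
      refine Finset.sum_congr rfl fun i _ => ?_
      rw [← map_smul]
      congr 1
      rw [← Pi.single_smul, smul_eq_mul, mul_one]
    rw [this, Finset.univ_sum_single]
  let h : P'' →ₗ[R] P := q.comp s''
  have hgh : ∀ z : P'', g (h z) = z := by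
    intro z
    have := DFunLike.congr_fun hps z
    simpa [h, hq] using this
  have hhdeg : ∀ (d : Fin n → ℤ) (z : P''), z ∈ 𝒬'' d → h z ∈ 𝒬 d := by
    intro d z hz
    show q (s'' z) ∈ 𝒬 d
    rw [show q (s'' z) = ∑ i, (s'' z) i • w i from rfl]
    apply AddSubgroup.sum_mem
    intro i _
    have := hPsmul (d - b i) (b i) (s'' z i) (w i) (hs d z hz i) (hw1 i)
    simpa [sub_add_cancel] using this
  -- abbreviations
  set S : Set (Fin n → ℤ) := {d : Fin n → ℤ | γ (ι d) ≤ γ (ι a)} with hS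
  -- (1) functoriality for f
  have h1 : Submodule.map f (Submodule.span R (⋃ d ∈ S, (𝒬' d : Set P'))) ≤
      Submodule.span R (⋃ d ∈ S, (𝒬 d : Set P)) := by
    rw [Submodule.map_span]
    apply Submodule.span_mono
    rintro _ ⟨x, hx, rfl⟩
    rw [Set.mem_iUnion₂] at hx ⊢
    obtain ⟨d, hd, hx⟩ := hx
    exact ⟨d, hd, hfdeg d x hx⟩
  -- (2) functoriality for g
  have h2 : Submodule.map g (Submodule.span R (⋃ d ∈ S, (𝒬 d : Set P))) ≤
      Submodule.span R (⋃ d ∈ S, (𝒬'' d : Set P'')) := by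
    rw [Submodule.map_span]
    apply Submodule.span_mono
    rintro _ ⟨x, hx, rfl⟩
    rw [Set.mem_iUnion₂] at hx ⊢
    obtain ⟨d, hd, hx⟩ := hx
    exact ⟨d, hd, hgdeg d x hx⟩
  -- (4) surjectivity on filtrations
  have h4 : Submodule.map g (Submodule.span R (⋃ d ∈ S, (𝒬 d : Set P))) =
      Submodule.span R (⋃ d ∈ S, (𝒬'' d : Set P'')) := by
    refine le_antisymm h2 ?_
    rw [Submodule.span_le]
    intro x'' hx''
    rw [Set.mem_iUnion₂] at hx''
    obtain ⟨d, hd, hx''⟩ := hx''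
    obtain ⟨x, hx, hgx⟩ := surjdeg d x'' hx''
    exact ⟨x, Submodule.subset_span (Set.mem_iUnion₂.2 ⟨d, hd, hx⟩), hgx⟩
  -- F a is contained in map f (F' a) ⊔ map h (F'' a)
  have hsplit : Submodule.span R (⋃ d ∈ S, (𝒬 d : Set P)) ≤
      Submodule.map f (Submodule.span R (⋃ d ∈ S, (𝒬' d : Set P'))) ⊔
      Submodule.map h (Submodule.span R (⋃ d ∈ S, (𝒬'' d : Set P''))) := by
    rw [Submodule.span_le]
    intro x hx
    rw [Set.mem_iUnion₂] at hx
    obtain ⟨d, hd, hx⟩ := hx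
    have hgx : g x ∈ 𝒬'' d := hgdeg d x hx
    have hk1 : x - h (g x) ∈ 𝒬 d := AddSubgroup.sub_mem _ hx (hhdeg d _ hgx)
    have hk2 : g (x - h (g x)) = 0 := by rw [map_sub, hgh, sub_self]
    obtain ⟨y, hy, hfy⟩ := kerdeg d _ hk1 hk2
    have hx_eq : x = f y + h (g x) := by rw [hfy]; abel
    rw [hx_eq]
    refine Submodule.add_mem_sup ?_ ?_
    · exact ⟨y, Submodule.subset_span (Set.mem_iUnion₂.2 ⟨d, hd, hy⟩), rfl⟩
    · exact ⟨g x, Submodule.subset_span (Set.mem_iUnion₂.2 ⟨d, hd, hgx⟩), rfl⟩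
  -- (3) exactness in the middle
  have h3 : Submodule.map f (Submodule.span R (⋃ d ∈ S, (𝒬' d : Set P'))) =
      Submodule.span R (⋃ d ∈ S, (𝒬 d : Set P)) ⊓ LinearMap.ker g := by
    refine le_antisymm (le_inf h1 ?_) ?_
    · rintro _ ⟨y, _, rfl⟩
      exact hexact ▸ LinearMap.mem_range_self f y
    · rintro x ⟨hxF, hxker⟩
      have := hsplit hxF
      rw [Submodule.mem_sup] at this
      obtain ⟨u, hu, v, hv, huv⟩ := this
      obtain ⟨z, hz, rfl⟩ := hv
      have hgu : g u = 0 := by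
        obtain ⟨y', _, rfl⟩ := hu
        have : f y' ∈ LinearMap.ker g := hexact ▸ LinearMap.mem_range_self f y'
        exact this
      have hz0 : z = 0 := by
        have := congrArg g huv
        rw [map_add, hgu, hgh, zero_add, LinearMap.mem_ker.1 hxker] at this
        exact this
      rw [hz0, map_zero, add_zero] at huv
      exact huv ▸ hu
  refine ⟨h1, h2, h3, h4, ?_⟩
  -- (5) monotonicity
  intro a' ha'
  apply Submodule.span_mono
  apply Set.iUnion₂_mono'
  intro d hd
  exact ⟨d, le_trans hd ha', le_refl _⟩
end

section
/- Let C ⊆ ℝ^2 be the cone generated by (1,0) and (1,√2). Then the monoid C ∩ ℤ^2 is not finitely generated; consequently the monoid ring S[C ∩ ℤ^2] is not a finitely generated S-algebra for any nonzero ring S. -/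
/-- The monoid `C ∩ ℤ²` of integer points of the cone `C ⊆ ℝ²` generated by
`(1,0)` and `(1,√2)`: the pairs `(a,b)` with `0 ≤ b` and `b ≤ a·√2`. -/
def sqrt2ConePoints : AddSubmonoid (ℤ × ℤ) where
  carrier := {p | 0 ≤ p.2 ∧ (p.2 : ℝ) ≤ (p.1 : ℝ) * Real.sqrt 2}
  zero_mem' := ⟨le_refl 0, by norm_num⟩
  add_mem' := by
    rintro ⟨a1, b1⟩ ⟨a2, b2⟩ ⟨h1, h1'⟩ ⟨h2, h2'⟩
    refine ⟨add_nonneg h1 h2, ?_⟩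
    simp only [Prod.snd_add, Prod.fst_add] at *
    push_cast
    nlinarith [h1', h2']

/-!
A finite set of nonzero integer points of the cone has, by irrationality of `√2`, all its
slopes strictly below `√2`, so it lies in the cone of some slope `s < √2`, and so does the
monoid it generates; but `(n, ⌊n√2⌋)` has slope above `s` once `n (√2 - s) > 1`.
A ring generated by the scalars and finitely many elements of `S[M]` consists of elements
supported on the submonoid generated by their supports, so `M` is then finitely generated.
-/

open Filter Topology

def coneIntPoints (α : ℝ) : AddSubmonoid (ℤ × ℤ) where
  carrier := {p | 0 ≤ p.2 ∧ (p.2 : ℝ) ≤ (p.1 : ℝ) * α}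
  zero_mem' := ⟨le_rfl, by simp⟩
  add_mem' := by
    rintro p q ⟨hp, hp'⟩ ⟨hq, hq'⟩
    refine ⟨add_nonneg hp hq, ?_⟩
    simp only [Prod.fst_add, Prod.snd_add, Int.cast_add]
    linarith

theorem sqrt2ConePoints_eq : sqrt2ConePoints = coneIntPoints (Real.sqrt 2) := rfl

section coneIntPoints

variable {α : ℝ}

theorem eventually_mem_coneIntPoints (hα : Irrational α) (hα0 : 0 < α) {p : ℤ × ℤ}
    (hp : p ∈ coneIntPoints α) : ∀ᶠ s in 𝓝[<] α, p ∈ coneIntPoints s := by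
  obtain ⟨hb, hba⟩ := hp
  rcases eq_or_ne p.1 0 with ha | ha
  · have hb0 : p.2 = 0 := by
      have : (p.2 : ℝ) ≤ 0 := by simpa [ha] using hba
      exact le_antisymm (by exact_mod_cast this) hb
    exact Eventually.of_forall fun s => ⟨hb, by simp [ha, hb0]⟩
  · have hlt : (p.2 : ℝ) < p.1 * α :=
      hba.lt_of_ne ((hα.intCast_mul ha).ne_int p.2).symm
    have ha0 : (0 : ℝ) < p.1 := by
      have : (0 : ℝ) < p.1 * α := (Int.cast_nonneg hb).trans_lt hlt
      exact pos_of_mul_pos_left this hα0.le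
    have hslope : (p.2 : ℝ) / p.1 < α := (div_lt_iff₀' ha0).2 hlt
    filter_upwards [Ioo_mem_nhdsLT hslope] with s hs
    exact ⟨hb, ((div_lt_iff₀' ha0).1 hs.1).le⟩

theorem exists_lt_subset_coneIntPoints (hα : Irrational α) (hα0 : 0 < α)
    (T : Finset (ℤ × ℤ)) (hT : (T : Set (ℤ × ℤ)) ⊆ coneIntPoints α) :
    ∃ s < α, (T : Set (ℤ × ℤ)) ⊆ coneIntPoints s := by
  have hall : ∀ᶠ s in 𝓝[<] α, ∀ p ∈ T, p ∈ coneIntPoints s :=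
    (Finset.eventually_all T).2 fun p hp => eventually_mem_coneIntPoints hα hα0 (hT hp)
  obtain ⟨s, hsT, hs⟩ := (hall.and self_mem_nhdsWithin).exists
  exact ⟨s, hs, hsT⟩

theorem not_coneIntPoints_le (hα0 : 0 ≤ α) {s : ℝ} (hs : s < α) :
    ¬ coneIntPoints α ≤ coneIntPoints s := by
  obtain ⟨n, hn⟩ := exists_nat_gt (α - s)⁻¹
  have hgap : 1 < n * (α - s) := (inv_lt_iff_one_lt_mul₀ (sub_pos.2 hs)).1 hn
  intro hle
  have hmem : ((n : ℤ), ⌊n * α⌋) ∈ coneIntPoints α :=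
    ⟨Int.floor_nonneg.2 (by positivity), by simpa using Int.floor_le _⟩
  have hfloor : (n : ℝ) * α - 1 < ⌊n * α⌋ := Int.sub_one_lt_floor _
  have hbelow : (⌊n * α⌋ : ℝ) ≤ n * s := by simpa using (hle hmem).2
  linarith

theorem coneIntPoints_not_fg (hα : Irrational α) (hα0 : 0 < α) : ¬ (coneIntPoints α).FG := by
  rintro ⟨T, hT⟩
  obtain ⟨s, hs, hTs⟩ :=
    exists_lt_subset_coneIntPoints hα hα0 T (hT ▸ AddSubmonoid.subset_closure)
  exact not_coneIntPoints_le hα0.le hs (hT ▸ AddSubmonoid.closure_le.2 hTs)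

end coneIntPoints

namespace AddMonoidAlgebra

variable {S M : Type*} [Ring S] [AddMonoid M]

variable (S) in
noncomputable def supportedSubring (N : AddSubmonoid M) : Subring (AddMonoidAlgebra S M) where
  toAddSubgroup := (supported ℤ S (N : Set M)).toAddSubgroup
  one_mem' := (Finset.coe_subset.2 support_coeff_one_subset).trans (by simp)
  mul_mem' := by
    classical
    intro x y hx hy m hm
    obtain ⟨a, ha, b, hb, rfl⟩ := Finset.mem_add.1 (support_coeff_mul_subset x y hm)
    exact N.add_mem (hx ha) (hy hb)

theorem mem_supportedSubring {N : AddSubmonoid M} {x : AddMonoidAlgebra S M} :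
    x ∈ supportedSubring S N ↔ ↑x.coeff.support ⊆ (N : Set M) := .rfl

theorem fg_of_subring_closure_eq_top [Nontrivial S] {t : Finset (AddMonoidAlgebra S M)}
    (ht : Subring.closure (Set.range (singleZeroRingHom : S →+* AddMonoidAlgebra S M) ∪ ↑t)
      = ⊤) : AddMonoid.FG M := by
  classical
  set T := t.biUnion fun x => x.coeff.support
  have hgen : Set.range (singleZeroRingHom : S →+* AddMonoidAlgebra S M) ∪ ↑t ⊆
      supportedSubring S (AddSubmonoid.closure (T : Set M)) := by
    rintro x (⟨c, rfl⟩ | hx)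
    · intro m hm
      rw [Finset.mem_singleton.1 (Finsupp.support_single_subset hm)]
      exact zero_mem _
    · exact fun m hm => AddSubmonoid.subset_closure (Finset.mem_biUnion.2 ⟨x, hx, hm⟩)
  have hsupp : supportedSubring S (AddSubmonoid.closure (T : Set M)) = ⊤ :=
    top_unique (ht ▸ Subring.closure_le.2 hgen)
  refine ⟨⟨T, eq_top_iff.2 fun m _ => ?_⟩⟩
  have hm : single m (1 : S) ∈ supportedSubring S (AddSubmonoid.closure (T : Set M)) :=
    hsupp ▸ Subring.mem_top _
  exact mem_supportedSubring.1 hm (by simp [coeff_single])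

end AddMonoidAlgebra

/-- Let `C ⊆ ℝ²` be the cone generated by `(1,0)` and `(1,√2)`.
Then the monoid `C ∩ ℤ²` is not finitely generated; consequently the monoid ring
`S[C ∩ ℤ²]` is not a finitely generated `S`-algebra for any nonzero ring `S`
(there is no finite set which, together with the scalars `S`, generates the
monoid ring as a ring). -/
theorem sqrt2_cone_monoid_not_fg :
    ¬ sqrt2ConePoints.FG ∧
    ∀ (S : Type) [Ring S] [Nontrivial S],
      ¬ ∃ t : Finset (AddMonoidAlgebra S ↥sqrt2ConePoints),
        Subring.closure
          (Set.range (AddMonoidAlgebra.singleZeroRingHom :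
              S →+* AddMonoidAlgebra S ↥sqrt2ConePoints) ∪ ↑t) = ⊤ := by
  have hcone : ¬ sqrt2ConePoints.FG :=
    sqrt2ConePoints_eq ▸ coneIntPoints_not_fg irrational_sqrt_two (by positivity)
  refine ⟨hcone, fun S _ _ ⟨t, ht⟩ => hcone ?_⟩
  exact (AddMonoid.fg_iff_addSubmonoid_fg _).1 (AddMonoidAlgebra.fg_of_subring_closure_eq_top ht)
end
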